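/- Let M be an mtt that is finite copying in the parameters with copying bound c, let t ∈ T_Δ be a fixed output tree, and let run_OI be defined from M, t and c as in the context. Then for every input tree s' ∈ T_Σ, every state q of rank n, all parameter-free trees u_1,…,u_n over Δ ∪ (Q × T_Σ), and every subtree t' of t: t' ∈ ⟦⟨q,s'⟩(u_1,…,u_n)⟧_OI if and only if there exist sets B_1,…,B_n of subtrees of t with |B_i| ≤ c and B_i ⊆ ⟦u_i⟧_OI for all i, such that (q,(B_1,…,B_n),t') ∈ run_OI(s'). -/

import Mathlib

namespace MttF

/-- Finite ordered trees over a label type `α`. -/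
inductive RTree (α : Type) : Type
  | node : α → List (RTree α) → RTree α

namespace RTree

variable {α β : Type}

/-- The root label of a tree. -/
def label : RTree α → α
  | node a _ => a

/-- The list of immediate subtrees of a tree. -/
def children : RTree α → List (RTree α)
  | node _ ts => ts

/-- Relabelling of trees. -/
def map (f : α → β) : RTree α → RTree β
  | node a ts => node (f a) (ts.attach.map (fun x => map f x.1))
decreasing_by
  have := List.sizeOf_lt_of_mem x.2
  simp only [node.sizeOf_spec]
  omega

/-- A tree is well-formed with respect to a rank function if every node labeled
by a rank-`k` symbol has exactly `k` children. `T_Σ` is the set of well-formed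
trees over `Σ`. -/
inductive Wf (rk : α → ℕ) : RTree α → Prop
  | node {a : α} {ts : List (RTree α)} :
      ts.length = rk a → (∀ t ∈ ts, Wf rk t) → Wf rk (node a ts)

/-- `Subtree u t` holds iff `u` is a subtree of `t` (rooted at some node of `t`). -/
inductive Subtree : RTree α → RTree α → Prop
  | refl (t : RTree α) : Subtree t t
  | step {u c : RTree α} {a : α} {ts : List (RTree α)} :
      c ∈ ts → Subtree u c → Subtree u (node a ts)

end RTree

/-- Labels for output trees with parameters: trees over `Δ ∪ Y`. -/
inductive OLab (Δ : Type) : Type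
  | out (d : Δ)
  | param (i : ℕ)

/-- Labels for right-hand sides of mtt rules: trees over `Δ ∪ (Q × X) ∪ Y`
(the second component of a call is the index of the input variable `x`). -/
inductive RLab (Δ Q : Type) : Type
  | out (d : Δ)
  | call (q : Q) (x : ℕ)
  | param (i : ℕ)

/-- Labels for "semantic" trees over `Δ ∪ (Q × T_Σ) ∪ Y`. -/
inductive SLab (Γ Δ Q : Type) : Type
  | out (d : Δ)
  | call (q : Q) (s : RTree Γ)
  | param (i : ℕ)

/-- Trees over `Δ ∪ Y`. -/
abbrev OT (Δ : Type) := RTree (OLab Δ)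
/-- Right-hand side trees over `Δ ∪ (Q × X) ∪ Y`. -/
abbrev Rhs (Δ Q : Type) := RTree (RLab Δ Q)
/-- Trees over `Δ ∪ (Q × T_Σ) ∪ Y`. -/
abbrev ST (Γ Δ Q : Type) := RTree (SLab Γ Δ Q)

/-- First-order substitution `x_i := ss_i` on a label of a right-hand side
(indices are 0-based; for well-formed rules the index is always in range). -/
def RLab.subst {Γ Δ Q : Type} (ss : List (RTree Γ)) : RLab Δ Q → SLab Γ Δ Q
  | .out d => .out d
  | .param i => .param i
  | .call q x =>
    match ss[x]? with
    | some s => .call q s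
    | none => .param x

/-- `r[x_1/s_1, …, x_k/s_k]`. -/
def substX {Γ Δ Q : Type} (ss : List (RTree Γ)) (r : Rhs Δ Q) : ST Γ Δ Q :=
  r.map (RLab.subst ss)

/-- Second-order (parameter) substitution `t[y_1/ts_1, …, y_n/ts_n]`
(`y` indices are 0-based). -/
def substY {Δ : Type} (ts : List (OT Δ)) : OT Δ → OT Δ
  | .node (.param i) _ => ts.getD i (.node (.param i) [])
  | .node (.out d) us => .node (.out d) (us.attach.map (fun x => substY ts x.1))
decreasing_by
  have := List.sizeOf_lt_of_mem x.2
  simp only [RTree.node.sizeOf_spec]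
  omega

/-- The embedding of `T_Δ` into the trees over `Δ ∪ Y`. -/
def embed {Δ : Type} (t : RTree Δ) : OT Δ := t.map OLab.out

variable {Γ Δ Q : Type}

/-- IO (call-by-value, inside-out) semantics: `SemIO rsel u t` holds iff
`t ∈ ⟦u⟧_IO`.  The rules of the transducer are given by a selector
`rsel q σ ss`: the set of right-hand sides of the `⟨q,σ⟩`-rules that are
applicable when the children of the current input node are `ss` (for a plain
mtt this does not depend on `ss`, cf. `plainSel`). -/
inductive SemIO (rsel : Q → Γ → List (RTree Γ) → Set (Rhs Δ Q)) :
    ST Γ Δ Q → OT Δ → Prop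
  | param (i : ℕ) :
      SemIO rsel (.node (.param i) []) (.node (.param i) [])
  | out {d : Δ} {us : List (ST Γ Δ Q)} {ts : List (OT Δ)}
      (hlen : ts.length = us.length)
      (h : ∀ i : Fin us.length, SemIO rsel (us.get i) (ts.get (i.cast hlen.symm))) :
      SemIO rsel (.node (.out d) us) (.node (.out d) ts)
  | call {q : Q} {σ : Γ} {ss : List (RTree Γ)} {us : List (ST Γ Δ Q)}
      {r : Rhs Δ Q} {t₀ : OT Δ} {ts : List (OT Δ)}
      (hr : r ∈ rsel q σ ss)
      (h₀ : SemIO rsel (substX ss r) t₀)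
      (hlen : ts.length = us.length)
      (h : ∀ i : Fin us.length, SemIO rsel (us.get i) (ts.get (i.cast hlen.symm))) :
      SemIO rsel (.node (.call q (.node σ ss)) us) (substY ts t₀)

mutual
/-- OI (call-by-name, outside-in) semantics: `SemOI rsel u t` holds iff
`t ∈ ⟦u⟧_OI`. -/
inductive SemOI (rsel : Q → Γ → List (RTree Γ) → Set (Rhs Δ Q)) :
    ST Γ Δ Q → OT Δ → Prop
  | param (i : ℕ) :
      SemOI rsel (.node (.param i) []) (.node (.param i) [])
  | out {d : Δ} {us : List (ST Γ Δ Q)} {ts : List (OT Δ)}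
      (hlen : ts.length = us.length)
      (h : ∀ i : Fin us.length, SemOI rsel (us.get i) (ts.get (i.cast hlen.symm))) :
      SemOI rsel (.node (.out d) us) (.node (.out d) ts)
  | call {q : Q} {σ : Γ} {ss : List (RTree Γ)} {us : List (ST Γ Δ Q)}
      {r : Rhs Δ Q} {t₀ : OT Δ} {t : OT Δ}
      (hr : r ∈ rsel q σ ss)
      (h₀ : SemOI rsel (substX ss r) t₀)
      (hs : OISub rsel us t₀ t) :
      SemOI rsel (.node (.call q (.node σ ss)) us) t

/-- OI-substitution: `OISub rsel us t₀ t` holds iff `t ∈ (t₀ ←_OI (⟦us_1⟧_OI, …, ⟦us_n⟧_OI))`,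
i.e. `t` is obtained from `t₀` by independently replacing every occurrence of a parameter
`y_i` by some member of `⟦us_i⟧_OI`. -/
inductive OISub (rsel : Q → Γ → List (RTree Γ) → Set (Rhs Δ Q)) :
    List (ST Γ Δ Q) → OT Δ → OT Δ → Prop
  | param {us : List (ST Γ Δ Q)} {i : ℕ} {t : OT Δ}
      (h : i < us.length) (hsem : SemOI rsel (us.get ⟨i, h⟩) t) :
      OISub rsel us (.node (.param i) []) t
  | out {us : List (ST Γ Δ Q)} {d : Δ} {ts ts' : List (OT Δ)}
      (hlen : ts'.length = ts.length)
      (h : ∀ i : Fin ts.length, OISub rsel us (ts.get i) (ts'.get (i.cast hlen.symm))) :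
      OISub rsel us (.node (.out d) ts) (.node (.out d) ts')
end

/-- The rule selector of a plain mtt: the applicable rules do not depend on the
child subtrees of the current input node. -/
def plainSel (rules : Q → Γ → Set (Rhs Δ Q)) :
    Q → Γ → List (RTree Γ) → Set (Rhs Δ Q) :=
  fun q σ _ => rules q σ

/-- The translation `τ_{IO,M} ⊆ T_Σ × T_Δ` realized in IO mode. -/
def tauIO (rankΓ : Γ → ℕ) (rankΔ : Δ → ℕ)
    (rsel : Q → Γ → List (RTree Γ) → Set (Rhs Δ Q)) (q₀ : Q) :
    Set (RTree Γ × RTree Δ) :=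
  {p | p.1.Wf rankΓ ∧ p.2.Wf rankΔ ∧
       SemIO rsel (.node (.call q₀ p.1) []) (embed p.2)}

/-- The translation `τ_{OI,M} ⊆ T_Σ × T_Δ` realized in OI mode. -/
def tauOI (rankΓ : Γ → ℕ) (rankΔ : Δ → ℕ)
    (rsel : Q → Γ → List (RTree Γ) → Set (Rhs Δ Q)) (q₀ : Q) :
    Set (RTree Γ × RTree Δ) :=
  {p | p.1.Wf rankΓ ∧ p.2.Wf rankΔ ∧
       SemOI rsel (.node (.call q₀ p.1) []) (embed p.2)}

/-- Well-formedness of a right-hand side of a rule of an mtt whose current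
input symbol has rank `k` and whose current state has rank `m`: output symbols
have the correct number of children, state calls `⟨q', x_i⟩` have `rank q'`
children and `i < k`, and parameters `y_j` satisfy `j < m`. -/
inductive RhsWf (rankΔ : Δ → ℕ) (rankQ : Q → ℕ) (k m : ℕ) : Rhs Δ Q → Prop
  | out {d : Δ} {ts : List (Rhs Δ Q)}
      (hlen : ts.length = rankΔ d) (h : ∀ t ∈ ts, RhsWf rankΔ rankQ k m t) :
      RhsWf rankΔ rankQ k m (.node (.out d) ts)
  | call {q : Q} {x : ℕ} {ts : List (Rhs Δ Q)}
      (hx : x < k) (hlen : ts.length = rankQ q)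
      (h : ∀ t ∈ ts, RhsWf rankΔ rankQ k m t) :
      RhsWf rankΔ rankQ k m (.node (.call q x) ts)
  | param {i : ℕ} (hi : i < m) : RhsWf rankΔ rankQ k m (.node (.param i) [])

/-- Well-formedness of a tree over `Δ ∪ (Q × T_Σ) ∪ Y`. -/
inductive STWf (rankΓ : Γ → ℕ) (rankΔ : Δ → ℕ) (rankQ : Q → ℕ) : ST Γ Δ Q → Prop
  | out {d : Δ} {ts : List (ST Γ Δ Q)}
      (hlen : ts.length = rankΔ d) (h : ∀ t ∈ ts, STWf rankΓ rankΔ rankQ t) :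
      STWf rankΓ rankΔ rankQ (.node (.out d) ts)
  | call {q : Q} {s : RTree Γ} {ts : List (ST Γ Δ Q)}
      (hs : s.Wf rankΓ) (hlen : ts.length = rankQ q)
      (h : ∀ t ∈ ts, STWf rankΓ rankΔ rankQ t) :
      STWf rankΓ rankΔ rankQ (.node (.call q s) ts)
  | param (i : ℕ) : STWf rankΓ rankΔ rankQ (.node (.param i) [])

/-- A tree over `Δ ∪ (Q × T_Σ) ∪ Y` is parameter-free if no `y_i` occurs in it. -/
inductive NoParam : ST Γ Δ Q → Prop
  | node {l : SLab Γ Δ Q} {ts : List (ST Γ Δ Q)}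
      (hl : ∀ i : ℕ, l ≠ .param i) (h : ∀ t ∈ ts, NoParam t) :
      NoParam (.node l ts)

/-- A macro tree transducer `M = (Q, Σ, Δ, q₀, R)`.  The alphabets `Γ` (input),
`Δ` (output) and the set `Q` of states are ranked; `q₀` has rank `0`; `rules q σ`
is the (finite) set `R_{q,σ}` of right-hand sides of the `⟨q,σ⟩`-rules, and every
right-hand side is a well-formed tree over `Δ ∪ (Q × X_k) ∪ Y_m`. -/
structure MTT (Γ Δ Q : Type) where
  rankΓ : Γ → ℕ
  rankΔ : Δ → ℕ
  rankQ : Q → ℕ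
  q₀ : Q
  q₀_rank : rankQ q₀ = 0
  rules : Q → Γ → Set (Rhs Δ Q)
  rules_fin : ∀ q σ, (rules q σ).Finite
  rules_wf : ∀ q σ, ∀ r ∈ rules q σ, RhsWf rankΔ rankQ (rankΓ σ) (rankQ q) r

/-- The rule selector of a plain mtt. -/
def MTT.sel (M : MTT Γ Δ Q) : Q → Γ → List (RTree Γ) → Set (Rhs Δ Q) :=
  plainSel M.rules

end MttF
namespace MttF

/-- The number of occurrences of the parameter `y_i` in a tree over `Δ ∪ Y`. -/
def countParam {Δ : Type} (i : ℕ) : OT Δ → ℕ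
  | .node (.param j) _ => if j = i then 1 else 0
  | .node (.out _) ts => (ts.attach.map (fun x => countParam i x.1)).sum
decreasing_by
  have := List.sizeOf_lt_of_mem x.2
  simp only [RTree.node.sizeOf_spec]
  omega

/-- The argument list `(y_1, …, y_m)`. -/
def paramArgs {Γ Δ Q : Type} (m : ℕ) : List (ST Γ Δ Q) :=
  (List.range m).map (fun i => .node (.param i) [])

/-- `M` is finite copying in the parameters with copying bound `c`: for every
state `q` of rank `k`, every `s ∈ T_Σ`, and every `u ∈ ⟦⟨q,s⟩(y_1,…,y_k)⟧_OI`,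
the number of occurrences of `y_i` in `u` is at most `c`. -/
def FinCopyP {Γ Δ Q : Type} (M : MTT Γ Δ Q) (c : ℕ) : Prop :=
  ∀ (q : Q) (s : RTree Γ), s.Wf M.rankΓ →
    ∀ u : OT Δ, SemOI M.sel (.node (.call q s) (paramArgs (M.rankQ q))) u →
      ∀ i < M.rankQ q, countParam i u ≤ c

/-- Triples `(q, β⃗, v') ∈ ⋃_i Q^{(i)} × P_c(V_t)^i × V_t`. -/
abbrev TripOI (Δ Q : Type) := Q × List (Set (RTree Δ)) × RTree Δ

/-- `β ∈ P_c(V_t)`: a set of at most `c` subtrees of `t`. -/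
def SmallSet {Δ : Type} (t : RTree Δ) (c : ℕ) (β : Set (RTree Δ)) : Prop :=
  (∀ w ∈ β, RTree.Subtree w t) ∧ β.ncard ≤ c

/-- The predicate `f_{β⃗,a⃗}(r, v')` of the inverse-type construction for
OI-mtts that are finite copying in the parameters. -/
inductive FPredOI {Δ Q : Type} (t : RTree Δ) (βs : List (Set (RTree Δ)))
    (aenv : List (Set (TripOI Δ Q))) : Rhs Δ Q → RTree Δ → Prop
  | param {i : ℕ} {v : RTree Δ} {β : Set (RTree Δ)}
      (h : βs[i]? = some β) (hv : v ∈ β) :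
      FPredOI t βs aenv (.node (.param i) []) v
  | out {d : Δ} {rs : List (Rhs Δ Q)} {ws : List (RTree Δ)}
      (hlen : ws.length = rs.length)
      (h : ∀ i : Fin rs.length, FPredOI t βs aenv (rs.get i) (ws.get (i.cast hlen.symm))) :
      FPredOI t βs aenv (.node (.out d) rs) (.node d ws)
  | call {q' : Q} {x : ℕ} {rs : List (Rhs Δ Q)} {v : RTree Δ}
      (γs : List (Set (RTree Δ)))
      (hlen : γs.length = rs.length)
      (ha : (q', γs, v) ∈ aenv.getD x ∅)
      (h : ∀ i : Fin rs.length, ∀ u ∈ γs.get (i.cast hlen.symm),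
            FPredOI t βs aenv (rs.get i) u) :
      FPredOI t βs aenv (.node (.call q' x) rs) v

/-- The run `run_OI(s)` of the inverse-type automaton of an OI-mtt that is
finite copying in the parameters with bound `c`, for the fixed output tree `t`:
`run_OI(σ(s_1,…,s_k)) = {(q, β⃗, v') | ∃ r ∈ R_{q,σ}: f_{β⃗,(run_OI(s_1),…,run_OI(s_k))}(r, v')}`. -/
def runOI {Γ Δ Q : Type} (rankQ : Q → ℕ)
    (rsel : Q → Γ → List (RTree Γ) → Set (Rhs Δ Q)) (t : RTree Δ) (c : ℕ) :
    RTree Γ → Set (TripOI Δ Q)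
  | .node σ ss =>
      {trip | trip.2.1.length = rankQ trip.1 ∧
        (∀ β ∈ trip.2.1, SmallSet t c β) ∧ RTree.Subtree trip.2.2 t ∧
        ∃ r ∈ rsel trip.1 σ ss,
          FPredOI t trip.2.1 (ss.attach.map (fun x => runOI rankQ rsel t c x.1)) r trip.2.2}
decreasing_by
  have := List.sizeOf_lt_of_mem x.2
  simp only [RTree.node.sizeOf_spec]
  omega

end MttF

/-! Induction on the input tree `s`. The invariant `RunOICorrect` says that `(q, β⃗, v)` lies in
`run_OI(s)` exactly when `v` is produced by some `⟨q, σ⟩`-rule at `s` once every parameter `y_i` is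
replaced by trees from `β_i`. Its inductive step is an induction on the right-hand side: at a call
`⟨q', x_j⟩(r_1, …, r_l)`, the OI substitution of the arguments into an output of `⟨q', s_j⟩` is
factored through the sets `γ_i` of subtrees of `v` that the occurrences of `y_i` turn into. There
are at most as many of them as occurrences of `y_i`, hence at most `c` by finite copying, so `γ⃗` is
one of the tuples that `run_OI(s_j)` ranges over. -/

namespace MttF

namespace RTree

variable {α β : Type}

theorem ind {P : RTree α → Prop}
    (h : ∀ (a : α) (ts : List (RTree α)), (∀ u ∈ ts, P u) → P (node a ts)) : ∀ t, P t
  | node a ts => h a ts (fun u hu => have := List.sizeOf_lt_of_mem hu; ind h u)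
decreasing_by simp only [node.sizeOf_spec]; omega

@[simp] theorem map_node (f : α → β) (a : α) (ts : List (RTree α)) :
    map f (node a ts) = node (f a) (ts.map (map f)) := by
  rw [map, List.attach_map_val]

theorem Subtree.trans {a b c : RTree α} (h₁ : Subtree a b) (h₂ : Subtree b c) : Subtree a c := by
  induction h₂ with
  | refl => exact h₁
  | step hm _ ih => exact Subtree.step hm ih

theorem Subtree.of_mem {u : RTree α} {a : α} {ts : List (RTree α)} (h : u ∈ ts) :
    Subtree u (node a ts) :=
  Subtree.step h (Subtree.refl u)

end RTree

section Forall₂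

variable {α β γ : Type*} {R S : α → β → Prop}

theorem forall₂_iff_get_cast {l₁ : List α} {l₂ : List β} :
    List.Forall₂ R l₁ l₂ ↔
      ∃ h : l₂.length = l₁.length, ∀ i : Fin l₁.length, R (l₁.get i) (l₂.get (i.cast h.symm)) := by
  rw [List.forall₂_iff_get]
  constructor
  · rintro ⟨hl, h⟩
    exact ⟨hl.symm, fun i => h i i.2 (hl ▸ i.2)⟩
  · rintro ⟨hl, h⟩
    exact ⟨hl.symm, fun i h₁ _ => h ⟨i, h₁⟩⟩

theorem forall₂_congr_of_mem {l₁ : List α} {l₂ : List β}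
    (h : ∀ a ∈ l₁, ∀ b ∈ l₂, (R a b ↔ S a b)) :
    List.Forall₂ R l₁ l₂ ↔ List.Forall₂ S l₁ l₂ := by
  induction l₁ generalizing l₂ with
  | nil => simp
  | cons a l ih =>
    cases l₂ with
    | nil => simp
    | cons b l' =>
      simp only [List.forall₂_cons]
      rw [h a (by simp) b (by simp), ih fun a ha b hb => h a (by simp [ha]) b (by simp [hb])]

theorem exists_forall₂_and_forall₂_iff {T : β → γ → Prop} {l₁ : List α} {l₃ : List γ} :
    (∃ l₂, List.Forall₂ R l₁ l₂ ∧ List.Forall₂ T l₂ l₃) ↔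
      List.Forall₂ (fun a c => ∃ b, R a b ∧ T b c) l₁ l₃ := by
  induction l₁ generalizing l₃ with
  | nil => simp
  | cons a l ih =>
    cases l₃ with
    | nil => simp
    | cons c l' =>
      rw [List.forall₂_cons, ← ih]
      constructor
      · rintro ⟨_, ⟨⟩ | ⟨hab, hlu⟩, ⟨⟩ | ⟨hbc, hu⟩⟩
        exact ⟨⟨_, hab, hbc⟩, _, hlu, hu⟩
      · rintro ⟨⟨b, hab, hbc⟩, u, hlu, hu⟩
        exact ⟨b :: u, .cons hab hlu, .cons hbc hu⟩

end Forall₂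

variable {Γ Δ Q : Type} {rsel : Q → Γ → List (RTree Γ) → Set (Rhs Δ Q)}

@[simp] theorem embed_node (d : Δ) (ts : List (RTree Δ)) :
    embed (.node d ts) = .node (OLab.out d) (ts.map embed) := by
  simp [embed]

@[simp] theorem countParam_param (i j : ℕ) (ts : List (OT Δ)) :
    countParam i (.node (.param j) ts) = if j = i then 1 else 0 := by
  rw [countParam]

@[simp] theorem countParam_out (i : ℕ) (d : Δ) (ts : List (OT Δ)) :
    countParam i (.node (.out d) ts) = (ts.map (countParam i)).sum := by
  rw [countParam, List.attach_map_val]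

@[simp] theorem substX_param (ss : List (RTree Γ)) (i : ℕ) (rs : List (Rhs Δ Q)) :
    substX ss (.node (.param i) rs) = .node (.param i) (rs.map (substX ss)) := by
  simp [substX, RLab.subst]

@[simp] theorem substX_out (ss : List (RTree Γ)) (d : Δ) (rs : List (Rhs Δ Q)) :
    substX ss (.node (.out d) rs) = .node (.out d) (rs.map (substX ss)) := by
  simp [substX, RLab.subst]

theorem substX_call (ss : List (RTree Γ)) (q : Q) {x : ℕ} (hx : x < ss.length)
    (rs : List (Rhs Δ Q)) :
    substX ss (.node (.call q x) rs) = .node (.call q ss[x]) (rs.map (substX ss)) := by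
  simp [substX, RLab.subst, hx]

theorem SemOI.param_iff {i : ℕ} {τ : OT Δ} :
    SemOI rsel (.node (.param i) []) τ ↔ τ = .node (.param i) [] := by
  constructor
  · rintro ⟨⟩
    rfl
  · rintro rfl
    exact .param i

theorem SemOI.out_iff {d : Δ} {us : List (ST Γ Δ Q)} {τ : OT Δ} :
    SemOI rsel (.node (.out d) us) τ ↔
      ∃ ts, τ = .node (.out d) ts ∧ List.Forall₂ (SemOI rsel) us ts := by
  constructor
  · rintro (_ | ⟨hlen, h⟩)
    exact ⟨_, rfl, forall₂_iff_get_cast.2 ⟨hlen, h⟩⟩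
  · rintro ⟨ts, rfl, h⟩
    obtain ⟨hlen, h⟩ := forall₂_iff_get_cast.1 h
    exact .out hlen h

theorem SemOI.call_iff {q : Q} {σ : Γ} {ss : List (RTree Γ)} {us : List (ST Γ Δ Q)}
    {τ : OT Δ} :
    SemOI rsel (.node (.call q (.node σ ss)) us) τ ↔
      ∃ r ∈ rsel q σ ss, ∃ t₀, SemOI rsel (substX ss r) t₀ ∧ OISub rsel us t₀ τ := by
  constructor
  · rintro (_ | _ | ⟨hr, h₀, hs⟩)
    exact ⟨_, hr, _, h₀, hs⟩
  · rintro ⟨r, hr, t₀, h₀, hs⟩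
    exact .call hr h₀ hs

theorem OISub.param_iff {us : List (ST Γ Δ Q)} {i : ℕ} {ts : List (OT Δ)} {τ : OT Δ} :
    OISub rsel us (.node (.param i) ts) τ ↔ ts = [] ∧ ∃ h : i < us.length, SemOI rsel us[i] τ := by
  constructor
  · rintro ⟨h, hsem⟩
    exact ⟨rfl, h, hsem⟩
  · rintro ⟨rfl, h, hsem⟩
    exact .param h hsem

theorem OISub.out_iff {us : List (ST Γ Δ Q)} {d : Δ} {ts : List (OT Δ)} {τ : OT Δ} :
    OISub rsel us (.node (.out d) ts) τ ↔
      ∃ ts', τ = .node (.out d) ts' ∧ List.Forall₂ (OISub rsel us) ts ts' := by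
  constructor
  · rintro (_ | ⟨hlen, h⟩)
    exact ⟨_, rfl, forall₂_iff_get_cast.2 ⟨hlen, h⟩⟩
  · rintro ⟨ts', rfl, h⟩
    obtain ⟨hlen, h⟩ := forall₂_iff_get_cast.1 h
    exact .out hlen h

/-- `OISubIn β τ v` says `v ∈ τ ←_OI (β 0, β 1, …)`, for sets `β i` of trees over `Δ`. -/
inductive OISubIn (β : ℕ → Set (RTree Δ)) : OT Δ → RTree Δ → Prop
  | param {i : ℕ} {v : RTree Δ} (hv : v ∈ β i) : OISubIn β (.node (.param i) []) v
  | out {d : Δ} {ts : List (OT Δ)} {vs : List (RTree Δ)} (hlen : vs.length = ts.length)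
      (h : ∀ i : Fin ts.length, OISubIn β (ts.get i) (vs.get (i.cast hlen.symm))) :
      OISubIn β (.node (.out d) ts) (.node d vs)

namespace OISubIn

variable {β β' : ℕ → Set (RTree Δ)}

theorem mono {τ : OT Δ} {v : RTree Δ} (h : OISubIn β τ v) (hβ : ∀ i, β i ⊆ β' i) :
    OISubIn β' τ v := by
  induction h with
  | param hv => exact .param (hβ _ hv)
  | out hlen _ ih => exact .out hlen ih

theorem param_iff {i : ℕ} {v : RTree Δ} : OISubIn β (.node (.param i) []) v ↔ v ∈ β i :=
  ⟨fun h => by cases h; assumption, .param⟩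

theorem out_iff {d : Δ} {ts : List (OT Δ)} {v : RTree Δ} :
    OISubIn β (.node (.out d) ts) v ↔
      ∃ vs, v = .node d vs ∧ List.Forall₂ (OISubIn β) ts vs := by
  constructor
  · rintro (_ | ⟨hlen, h⟩)
    exact ⟨_, rfl, forall₂_iff_get_cast.2 ⟨hlen, h⟩⟩
  · rintro ⟨vs, rfl, h⟩
    obtain ⟨hlen, h⟩ := forall₂_iff_get_cast.1 h
    exact .out hlen h

theorem embed_self (v : RTree Δ) : OISubIn β (embed v) v := by
  induction v using RTree.ind with
  | _ d vs ih =>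
    rw [embed_node, out_iff]
    refine ⟨vs, rfl, ?_⟩
    simpa [List.forall₂_map_left_iff, List.forall₂_same] using ih

theorem empty_iff {τ : OT Δ} {v : RTree Δ} :
    OISubIn (fun _ => ∅) τ v ↔ τ = embed v := by
  refine ⟨fun h => ?_, fun h => h ▸ embed_self v⟩
  induction h with
  | param hv => exact absurd hv (Set.notMem_empty _)
  | out hlen _ ih =>
    rw [embed_node]
    congr 1
    refine List.ext_get (by simp [hlen]) fun n h₁ h₂ => ?_
    simpa using ih ⟨n, h₁⟩

end OISubIn

/-- `SemOIIn rsel β u v` says `v ∈ ⟦u⟧_OI ←_OI (β 0, β 1, …)`. -/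
def SemOIIn (rsel : Q → Γ → List (RTree Γ) → Set (Rhs Δ Q)) (β : ℕ → Set (RTree Δ))
    (u : ST Γ Δ Q) (v : RTree Δ) : Prop :=
  ∃ τ, SemOI rsel u τ ∧ OISubIn β τ v

namespace SemOIIn

variable {β : ℕ → Set (RTree Δ)}

theorem empty_iff {u : ST Γ Δ Q} {v : RTree Δ} :
    SemOIIn rsel (fun _ => ∅) u v ↔ SemOI rsel u (embed v) := by
  simp [SemOIIn, OISubIn.empty_iff]

theorem param_iff {i : ℕ} {v : RTree Δ} :
    SemOIIn rsel β (.node (.param i) []) v ↔ v ∈ β i := by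
  simp [SemOIIn, SemOI.param_iff, OISubIn.param_iff]

theorem out_iff {d : Δ} {us : List (ST Γ Δ Q)} {v : RTree Δ} :
    SemOIIn rsel β (.node (.out d) us) v ↔
      ∃ vs, v = .node d vs ∧ List.Forall₂ (SemOIIn rsel β) us vs := by
  constructor
  · rintro ⟨_, hsem, hv⟩
    obtain ⟨ts, rfl, hts⟩ := SemOI.out_iff.1 hsem
    obtain ⟨vs, rfl, hvs⟩ := OISubIn.out_iff.1 hv
    exact ⟨vs, rfl, exists_forall₂_and_forall₂_iff.1 ⟨ts, hts, hvs⟩⟩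
  · rintro ⟨vs, rfl, h⟩
    obtain ⟨ts, hts, hvs⟩ := exists_forall₂_and_forall₂_iff.2 h
    exact ⟨_, SemOI.out_iff.2 ⟨ts, rfl, hts⟩, OISubIn.out_iff.2 ⟨vs, rfl, hvs⟩⟩

end SemOIIn

theorem OISub.paramArgs_self {us : List (ST Γ Δ Q)} {t₁ τ : OT Δ} (h : OISub rsel us t₁ τ) :
    OISub rsel (paramArgs us.length) t₁ t₁ := by
  induction t₁ using RTree.ind generalizing τ with
  | _ l ts ih =>
    cases l with
    | param i =>
      obtain ⟨rfl, hi, -⟩ := OISub.param_iff.1 h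
      refine OISub.param_iff.2 ⟨rfl, by simpa [paramArgs] using hi, ?_⟩
      simpa [paramArgs] using SemOI.param (rsel := rsel) (Γ := Γ) i
    | out d =>
      obtain ⟨ts', rfl, hts⟩ := OISub.out_iff.1 h
      obtain ⟨_, hidx⟩ := forall₂_iff_get_cast.1 hts
      refine OISub.out_iff.2 ⟨ts, rfl, forall₂_iff_get_cast.2 ⟨rfl, fun i => ?_⟩⟩
      exact ih _ (List.get_mem _ _) (hidx i)

theorem OISubIn.exists_oisub {us : List (ST Γ Δ Q)} {β γ : ℕ → Set (RTree Δ)} {t₁ : OT Δ}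
    {v : RTree Δ} (h : OISubIn γ t₁ v)
    (hγ : ∀ j, ∀ u ∈ γ j, ∃ hj : j < us.length, SemOIIn rsel β us[j] u) :
    ∃ τ, OISub rsel us t₁ τ ∧ OISubIn β τ v := by
  induction h with
  | param hv =>
    obtain ⟨hj, τ, hsem, hτ⟩ := hγ _ _ hv
    exact ⟨τ, .param hj hsem, hτ⟩
  | out hlen _ ih =>
    obtain ⟨ts', hts, hvs⟩ := exists_forall₂_and_forall₂_iff.2 (forall₂_iff_get_cast.2 ⟨hlen, ih⟩)
    exact ⟨_, OISub.out_iff.2 ⟨ts', rfl, hts⟩, OISubIn.out_iff.2 ⟨_, rfl, hvs⟩⟩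

theorem OISub.exists_oisubIn {us : List (ST Γ Δ Q)} {β : ℕ → Set (RTree Δ)} {t₁ τ : OT Δ}
    {v : RTree Δ} (h : OISub rsel us t₁ τ) (hv : OISubIn β τ v) :
    ∃ γ : ℕ → Set (RTree Δ), OISubIn γ t₁ v ∧ ∀ j, (γ j).ncard ≤ countParam j t₁ ∧
      ∀ u ∈ γ j, RTree.Subtree u v ∧ ∃ hj : j < us.length, SemOIIn rsel β us[j] u := by
  induction t₁ using RTree.ind generalizing τ v with
  | _ l ts ih =>
    cases l with
    | param i =>
      obtain ⟨rfl, hi, hsem⟩ := OISub.param_iff.1 h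
      refine ⟨fun j => if j = i then {v} else ∅, .param (by simp), fun j => ?_⟩
      dsimp only
      split_ifs with hji
      · subst hji
        simpa using ⟨.refl v, hi, τ, hsem, hv⟩
      · simp [Ne.symm hji]
    | out d =>
      obtain ⟨ts', rfl, hts⟩ := OISub.out_iff.1 h
      obtain ⟨vs, rfl, hvs⟩ := OISubIn.out_iff.1 hv
      obtain ⟨hlen, hcomp⟩ :=
        forall₂_iff_get_cast.1 (exists_forall₂_and_forall₂_iff.1 ⟨ts', hts, hvs⟩)
      choose γs hγ hspec using fun i =>
        have ⟨_, hsub, hsubIn⟩ := hcomp i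
        ih _ (List.get_mem _ _) hsub hsubIn
      refine ⟨fun j => ⋃ i, γs i j,
        .out hlen fun i => (hγ i).mono fun j => Set.subset_iUnion (fun i => γs i j) i,
        fun j => ⟨?_, fun u hu => ?_⟩⟩
      · calc (⋃ i, γs i j).ncard ≤ ∑ i, (γs i j).ncard := Set.ncard_iUnion_le_of_fintype _
          _ ≤ ∑ i, countParam j (ts.get i) := Finset.sum_le_sum fun i _ => (hspec i j).1
          _ = countParam j (.node (.out d) ts) := by simp [← List.sum_ofFn]
      · obtain ⟨i, hu⟩ := Set.mem_iUnion.1 hu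
        obtain ⟨hsub, hfill⟩ := (hspec i j).2 u hu
        exact ⟨hsub.trans (.of_mem (List.get_mem _ _)), hfill⟩

namespace FPredOI

variable {t : RTree Δ} {βs : List (Set (RTree Δ))} {aenv : List (Set (TripOI Δ Q))}

theorem param_iff {i : ℕ} {v : RTree Δ} :
    FPredOI t βs aenv (.node (.param i) []) v ↔ v ∈ βs.getD i ∅ := by
  rw [List.getD_eq_getElem?_getD]
  constructor
  · rintro (⟨h, hv⟩ | _ | _)
    simpa [h] using hv
  · intro hv
    cases hβ : βs[i]? with
    | none => simp [hβ] at hv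
    | some β => exact .param hβ (by simpa [hβ] using hv)

theorem out_iff {d : Δ} {rs : List (Rhs Δ Q)} {v : RTree Δ} :
    FPredOI t βs aenv (.node (.out d) rs) v ↔
      ∃ ws, v = .node d ws ∧ List.Forall₂ (FPredOI t βs aenv) rs ws := by
  constructor
  · rintro (_ | ⟨hlen, h⟩ | _)
    exact ⟨_, rfl, forall₂_iff_get_cast.2 ⟨hlen, h⟩⟩
  · rintro ⟨ws, rfl, h⟩
    obtain ⟨hlen, h⟩ := forall₂_iff_get_cast.1 h
    exact .out hlen h

theorem call_iff {q' : Q} {x : ℕ} {rs : List (Rhs Δ Q)} {v : RTree Δ} :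
    FPredOI t βs aenv (.node (.call q' x) rs) v ↔
      ∃ γs, (q', γs, v) ∈ aenv.getD x ∅ ∧
        List.Forall₂ (fun r γ => ∀ u ∈ γ, FPredOI t βs aenv r u) rs γs := by
  constructor
  · rintro (_ | _ | ⟨γs, hlen, ha, h⟩)
    exact ⟨γs, ha, forall₂_iff_get_cast.2 ⟨hlen, h⟩⟩
  · rintro ⟨γs, ha, h⟩
    obtain ⟨hlen, h⟩ := forall₂_iff_get_cast.1 h
    exact .call γs hlen ha h

end FPredOI

theorem mem_runOI_iff {rankQ : Q → ℕ} {t : RTree Δ} {c : ℕ} {s : RTree Γ} {q : Q}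
    {βs : List (Set (RTree Δ))} {v : RTree Δ} :
    (q, βs, v) ∈ runOI rankQ rsel t c s ↔
      βs.length = rankQ q ∧ (∀ β ∈ βs, SmallSet t c β) ∧ RTree.Subtree v t ∧
        ∃ r ∈ rsel q s.label s.children,
          FPredOI t βs (s.children.map (runOI rankQ rsel t c)) r v := by
  cases s
  rw [runOI, List.attach_map_val]
  rfl

def RunOICorrect (M : MTT Γ Δ Q) (c : ℕ) (t : RTree Δ) (s : RTree Γ) : Prop :=
  ∀ (q : Q) (βs : List (Set (RTree Δ))) (v : RTree Δ),
    βs.length = M.rankQ q → (∀ β ∈ βs, SmallSet t c β) → RTree.Subtree v t →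
      ((∃ r ∈ M.rules q s.label, SemOIIn M.sel (βs.getD · ∅) (substX s.children r) v) ↔
        (q, βs, v) ∈ runOI M.rankQ M.sel t c s)

variable {M : MTT Γ Δ Q} {c : ℕ} {t : RTree Δ}

theorem semOIIn_call_iff_mem_runOI (hfc : FinCopyP M c) {s : RTree Γ} (hs : s.Wf M.rankΓ)
    (hrun : RunOICorrect M c t s) {q : Q} {args : List (ST Γ Δ Q)}
    (hargs : args.length = M.rankQ q) {β : ℕ → Set (RTree Δ)} {v : RTree Δ}
    (hv : RTree.Subtree v t) :
    SemOIIn M.sel β (.node (.call q s) args) v ↔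
      ∃ γs, (q, γs, v) ∈ runOI M.rankQ M.sel t c s ∧
        List.Forall₂ (fun a γ => ∀ u ∈ γ, SemOIIn M.sel β a u) args γs := by
  obtain ⟨σ, ss⟩ := s
  constructor
  · rintro ⟨τ, hsem, hτ⟩
    obtain ⟨r, hr, t₁, hsem₁, hsub⟩ := SemOI.call_iff.1 hsem
    obtain ⟨γ, hγ, hspec⟩ := hsub.exists_oisubIn hτ
    -- `t₁ ∈ ⟦⟨q, s⟩(y_1, …, y_n)⟧_OI`, so the copying bound applies to it.
    have hcopy : ∀ j < M.rankQ q, countParam j t₁ ≤ c :=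
      hfc q _ hs t₁ (.call hr hsem₁ (hargs ▸ hsub.paramArgs_self))
    set γs := List.ofFn fun j : Fin args.length => γ j
    have hγs : ∀ j, γ j ⊆ γs.getD j ∅ := by
      intro j u hu
      obtain ⟨hj, -⟩ := ((hspec j).2 u hu).2
      rw [List.getD_eq_getElem _ _ (by simpa [γs] using hj)]
      simpa [γs] using hu
    refine ⟨γs, (hrun q γs v (by simp [γs, hargs]) ?_ hv).1 ⟨r, hr, t₁, hsem₁, hγ.mono hγs⟩, ?_⟩
    · intro β hβ
      obtain ⟨j, rfl⟩ := List.mem_ofFn.1 hβ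
      exact ⟨fun u hu => ((hspec j).2 u hu).1.trans hv, (hspec j).1.trans (hcopy j (hargs ▸ j.2))⟩
    · refine List.forall₂_iff_get.2 ⟨by simp [γs], fun j h₁ h₂ u hu => ?_⟩
      obtain ⟨_, hfill⟩ := ((hspec j).2 u (by simpa [γs] using hu)).2
      simpa using hfill
  · rintro ⟨γs, hγs, hF⟩
    obtain ⟨hlen, hsmall, -⟩ := mem_runOI_iff.1 hγs
    obtain ⟨r, hr, t₁, hsem₁, hγ⟩ := (hrun q γs v hlen hsmall hv).2 hγs
    obtain ⟨τ, hsub, hτ⟩ := hγ.exists_oisub (us := args) (β := β) fun j u hu => by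
      have hj : j < γs.length := by
        by_contra hj
        rw [List.getD_eq_default _ _ (not_lt.1 hj)] at hu
        exact hu.elim
      rw [List.getD_eq_getElem _ _ hj] at hu
      have hj' : j < args.length := hF.length_eq ▸ hj
      exact ⟨hj', by simpa using hF.get hj' hj u hu⟩
    exact ⟨τ, SemOI.call_iff.2 ⟨r, hr, t₁, hsem₁, hsub⟩, hτ⟩

theorem semOIIn_substX_iff_fPredOI (hfc : FinCopyP M c) {ss : List (RTree Γ)}
    (hss : ∀ s ∈ ss, s.Wf M.rankΓ) (hrun : ∀ s ∈ ss, RunOICorrect M c t s)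
    {βs : List (Set (RTree Δ))} {m : ℕ} {r : Rhs Δ Q} (hr : RhsWf M.rankΔ M.rankQ ss.length m r)
    {v : RTree Δ} (hv : RTree.Subtree v t) :
    SemOIIn M.sel (βs.getD · ∅) (substX ss r) v ↔
      FPredOI t βs (ss.map (runOI M.rankQ M.sel t c)) r v := by
  induction r using RTree.ind generalizing v with
  | _ l rs ih =>
    cases hr with
    | param hi => rw [substX_param, List.map_nil, SemOIIn.param_iff, FPredOI.param_iff]
    | out _ hrs =>
      rw [substX_out, SemOIIn.out_iff, FPredOI.out_iff]
      refine exists_congr fun ws => and_congr_right fun hws => ?_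
      subst hws
      rw [List.forall₂_map_left_iff]
      exact forall₂_congr_of_mem fun r hr w hw => ih r hr (hrs r hr) (.trans (.of_mem hw) hv)
    | call hx hlen hrs =>
      rw [substX_call _ _ hx, semOIIn_call_iff_mem_runOI hfc (hss _ (List.getElem_mem hx))
          (hrun _ (List.getElem_mem hx)) (by simpa using hlen) hv, FPredOI.call_iff,
        List.getD_eq_getElem _ _ (by simpa using hx), List.getElem_map]
      refine exists_congr fun γs => and_congr_right fun hγs => ?_
      obtain ⟨-, hsmall, -⟩ := mem_runOI_iff.1 hγs
      rw [List.forall₂_map_left_iff]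
      exact forall₂_congr_of_mem fun r hr γ hγ =>
        forall₂_congr fun u hu => ih r hr (hrs r hr) ((hsmall γ hγ).1 u hu)

theorem runOICorrect_of_wf (hfc : FinCopyP M c) {s : RTree Γ} (hs : s.Wf M.rankΓ) :
    RunOICorrect M c t s := by
  induction s using RTree.ind with
  | _ σ ss ih =>
    intro q βs v hlen hsmall hv
    obtain ⟨hk, hss⟩ : ss.length = M.rankΓ σ ∧ ∀ s ∈ ss, s.Wf M.rankΓ := by
      cases hs with | node hk hss => exact ⟨hk, hss⟩
    rw [mem_runOI_iff, and_iff_right hlen, and_iff_right hsmall, and_iff_right hv]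
    exact exists_congr fun r => and_congr_right fun hr =>
      semOIIn_substX_iff_fPredOI hfc hss (fun s h => ih s h (hss s h))
        (hk ▸ M.rules_wf q σ r hr) hv

/-- the correctness claim for the inverse-type construction for
parameter-finite-copying OI-mtts.  For every input tree `s'`, state `q` of rank
`n`, parameter-free trees `u_1,…,u_n` over `Δ ∪ (Q × T_Σ)`, and every subtree
`t'` of `t`: `t' ∈ ⟦⟨q,s'⟩(u_1,…,u_n)⟧_OI` iff there exist sets `B_1,…,B_n` of
subtrees of `t` with `|B_i| ≤ c` and `B_i ⊆ ⟦u_i⟧_OI` for all `i`, such that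
`(q,(B_1,…,B_n),t') ∈ run_OI(s')`. -/
theorem runOI_claim {Γ Δ Q : Type} [Fintype Γ] [Fintype Δ] [Fintype Q]
    (M : MTT Γ Δ Q) (c : ℕ) (hfc : FinCopyP M c)
    (t : RTree Δ) (ht : t.Wf M.rankΔ)
    (s' : RTree Γ) (hs : s'.Wf M.rankΓ)
    (q : Q) (us : List (ST Γ Δ Q)) (hlen : us.length = M.rankQ q)
    (hus : ∀ u ∈ us, STWf M.rankΓ M.rankΔ M.rankQ u ∧ NoParam u)
    (t' : RTree Δ) (ht' : RTree.Subtree t' t) :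
    SemOI M.sel (.node (.call q s') us) (embed t') ↔
      ∃ βs : List (Set (RTree Δ)),
        List.Forall₂ (fun u β => (∀ w ∈ β, RTree.Subtree w t) ∧ β.ncard ≤ c ∧
            ∀ w ∈ β, SemOI M.sel u (embed w)) us βs ∧
        (q, βs, t') ∈ runOI M.rankQ M.sel t c s' := by
  refine SemOIIn.empty_iff.symm.trans
    ((semOIIn_call_iff_mem_runOI hfc hs (runOICorrect_of_wf hfc hs) hlen ht').trans ?_)
  simp only [SemOIIn.empty_iff]
  refine exists_congr fun βs =>
    ⟨fun ⟨hrun, hF⟩ => ⟨?_, hrun⟩, fun ⟨hF, hrun⟩ => ⟨hrun, hF.imp fun _ _ h => h.2.2⟩⟩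
  obtain ⟨-, hsmall, -⟩ := mem_runOI_iff.1 hrun
  exact (forall₂_congr_of_mem fun _ _ β hβ =>
    ⟨fun h => ⟨(hsmall β hβ).1, (hsmall β hβ).2, h⟩, fun h => h.2.2⟩).1 hF

end MttF
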